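/- arXiv:2105.05297 — 3 statements merged into one kernel-verified Lean document; each statement's English description precedes it below -/
import Mathlib

section
/- Let r > 0, λ > 0, ρ ≠ 0 and σ² > 0 be real numbers, and define f : [0,1) → ℝ by f(γ) = −r ρ² (1−γ) σ² + (λ/2)·log(1−γ). Then f attains its maximum on [0,1) at the unique point γ* = max(0, 1 − λ/(2 r ρ² σ²)); i.e., f(γ*) ≥ f(γ) for all γ ∈ [0,1), with strict inequality for γ ≠ γ*. -/
/-!
With `t = 1 - γ`, `a = r ρ² σ²` and `c = λ/2` the objective is `g t = -a t + c log t` on `(0, 1]`.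
The strict tangent-line bound for the concave `log` at `s` gives `g t < g s + (c/s - a)(t - s)`
for `t ≠ s`. At `s = c/a` the slope term vanishes; when `c/a > 1` the maximizer is the endpoint
`s = 1`, where the slope `c - a` is positive and `t - 1 ≤ 0`.
-/

open Real Set

lemma Real.log_lt_log_add_sub_div {s t : ℝ} (hs : 0 < s) (ht : 0 < t) (hts : t ≠ s) :
    log t < log s + (t - s) / s := by
  have hne : t / s ≠ 1 := fun h => hts ((div_eq_one_iff_eq hs.ne').mp h)
  have h := log_lt_sub_one_of_pos (div_pos ht hs) hne
  rw [log_div ht.ne' hs.ne'] at h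
  have : t / s - 1 = (t - s) / s := by field_simp
  linarith

lemma neg_mul_add_mul_log_lt_tangent (a : ℝ) {c s t : ℝ} (hc : 0 < c) (hs : 0 < s) (ht : 0 < t)
    (hts : t ≠ s) :
    -a * t + c * log t < -a * s + c * log s + (c / s - a) * (t - s) := by
  have h := mul_lt_mul_of_pos_left (log_lt_log_add_sub_div hs ht hts) hc
  have : c * ((t - s) / s) = c / s * (t - s) := by ring
  nlinarith

lemma neg_mul_add_mul_log_lt_of_ne_min_one_div {a c t : ℝ} (ha : 0 < a) (hc : 0 < c)
    (ht : t ∈ Ioc 0 1) (hne : t ≠ min 1 (c / a)) :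
    -a * t + c * log t < -a * min 1 (c / a) + c * log (min 1 (c / a)) := by
  have hs : 0 < min 1 (c / a) := lt_min one_pos (div_pos hc ha)
  have hslope : (c / min 1 (c / a) - a) * (t - min 1 (c / a)) ≤ 0 := by
    rcases le_or_gt (c / a) 1 with h | h
    · rw [min_eq_right h, div_div_cancel₀ hc.ne', sub_self, zero_mul]
    · rw [min_eq_left h.le, div_one]
      have : a < c := (one_lt_div ha).mp h
      exact mul_nonpos_of_nonneg_of_nonpos (by linarith) (by linarith [ht.2])
  linarith [neg_mul_add_mul_log_lt_tangent a hc hs ht.1 hne]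

/-- Lemma 1 (optimal attention): the objective
`f(γ) = −r ρ² (1−γ) σ² + (λ/2)·log(1−γ)` attains its maximum on `[0,1)`
at the unique point `γ* = max(0, 1 − λ/(2 r ρ² σ²))`. -/
theorem optimal_attention
    (r lam ρ σ2 : ℝ) (hr : 0 < r) (hlam : 0 < lam) (hρ : ρ ≠ 0) (hσ : 0 < σ2)
    (f : ℝ → ℝ)
    (hf : ∀ γ, f γ = -r * ρ ^ 2 * (1 - γ) * σ2 + (lam / 2) * Real.log (1 - γ))
    (γstar : ℝ) (hγstar : γstar = max 0 (1 - lam / (2 * r * ρ ^ 2 * σ2))) :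
    γstar ∈ Set.Ico (0 : ℝ) 1 ∧
      ∀ γ ∈ Set.Ico (0 : ℝ) 1, f γ ≤ f γstar ∧ (γ ≠ γstar → f γ < f γstar) := by
  set a := r * ρ ^ 2 * σ2
  set s := min 1 (lam / 2 / a)
  have ha : 0 < a := by positivity
  have hs : 0 < s := lt_min one_pos (by positivity)
  have hγstar_eq : γstar = 1 - s := by
    rw [hγstar, ← sub_self (1 : ℝ), max_sub_sub_left]
    simp only [s, a, div_div, mul_assoc]
  have hf_sub : ∀ γ, f γ = -a * (1 - γ) + lam / 2 * log (1 - γ) := fun γ => by rw [hf]; ring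
  have hstrict : ∀ γ ∈ Ico (0 : ℝ) 1, γ ≠ γstar → f γ < f γstar := fun γ hγ hne => by
    rw [hf_sub, hf_sub, hγstar_eq, sub_sub_cancel]
    exact neg_mul_add_mul_log_lt_of_ne_min_one_div ha (half_pos hlam)
      ⟨by linarith [hγ.2], by linarith [hγ.1]⟩ (fun h => hne (by rw [hγstar_eq]; linarith))
  refine ⟨⟨by linarith [min_le_left 1 (lam / 2 / a)], by linarith⟩, fun γ hγ => ⟨?_, hstrict γ hγ⟩⟩
  rcases eq_or_ne γ γstar with rfl | hne
  · exact le_rfl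
  · exact (hstrict γ hγ hne).le
end

section
/- Let r > 0, λ > 0, ρ ≠ 0 and σ² > 0 with λ ≥ 2 r ρ² σ², and define f : [0,1) → ℝ by f(γ) = −r ρ² (1−γ) σ² + (λ/2)·log(1−γ). Then f is strictly decreasing on (0,1) and f(0) > f(γ) for every γ ∈ (0,1); in particular γ* = 0 is the unique maximizer of f on [0,1). -/
open Set Real

/-- On `(0, 1]` the derivative `a / x - c` exceeds `a - c ≥ 0`. -/
theorem strictMonoOn_mul_log_sub_mul {a c : ℝ} (ha : 0 < a) (hca : c ≤ a) :
    StrictMonoOn (fun x => a * log x - c * x) (Ioc 0 1) := by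
  refine strictMonoOn_of_deriv_pos (convex_Ioc 0 1) ?_ ?_
  · intro x hx
    fun_prop (disch := exact hx.1.ne')
  · intro x hx
    rw [interior_Ioc] at hx
    have hderiv : HasDerivAt (fun x => a * log x - c * x) (a * x⁻¹ - c * 1) x :=
      ((hasDerivAt_log hx.1.ne').const_mul a).sub ((hasDerivAt_id x).const_mul c)
    have hax : a < a / x := by rw [lt_div_iff₀ hx.1]; nlinarith [hx.2]
    rw [hderiv.deriv, ← div_eq_mul_inv]
    linarith

theorem optimal_attention_corner_general
    (r lam ρ σ2 : ℝ) (hlam : 0 < lam)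
    (hcorner : 2 * r * ρ ^ 2 * σ2 ≤ lam)
    (f : ℝ → ℝ)
    (hf : ∀ γ, f γ = -r * ρ ^ 2 * (1 - γ) * σ2 + (lam / 2) * Real.log (1 - γ)) :
    StrictAntiOn f (Set.Ioo (0 : ℝ) 1) ∧
      (∀ γ ∈ Set.Ioo (0 : ℝ) 1, f 0 > f γ) ∧
      ∀ γ ∈ Set.Ico (0 : ℝ) 1, f γ ≤ f 0 ∧ (γ ≠ 0 → f γ < f 0) := by
  have hmono := strictMonoOn_mul_log_sub_mul (a := lam / 2) (c := r * ρ ^ 2 * σ2)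
    (by positivity) (by linarith)
  have hanti : StrictAntiOn f (Ico 0 1) := by
    intro x hx y hy hxy
    have := hmono ⟨by linarith [hy.2], by linarith [hy.1]⟩
      ⟨by linarith [hx.2], by linarith [hx.1]⟩ (by linarith : 1 - y < 1 - x)
    simp only [hf]
    linarith
  have hdrop : ∀ γ ∈ Ico (0 : ℝ) 1, γ ≠ 0 → f γ < f 0 := fun γ hγ hne =>
    hanti (left_mem_Ico.2 one_pos) hγ (lt_of_le_of_ne hγ.1 (Ne.symm hne))
  refine ⟨hanti.mono Ioo_subset_Ico_self, fun γ hγ => hdrop γ (Ioo_subset_Ico_self hγ) hγ.1.ne',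
    fun γ hγ => ⟨?_, hdrop γ hγ⟩⟩
  rcases eq_or_ne γ 0 with rfl | hne
  · exact le_rfl
  · exact (hdrop γ hγ hne).le

/-- Corner-solution case of Lemma 1: if `λ ≥ 2 r ρ² σ²`, then the objective
`f(γ) = −r ρ² (1−γ) σ² + (λ/2)·log(1−γ)` is strictly decreasing on `(0,1)`,
`f(0) > f(γ)` for every `γ ∈ (0,1)`, and `γ* = 0` is the unique maximizer of
`f` on `[0,1)`. -/
theorem optimal_attention_corner
    (r lam ρ σ2 : ℝ) (hr : 0 < r) (hlam : 0 < lam) (hρ : ρ ≠ 0) (hσ : 0 < σ2)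
    (hcorner : 2 * r * ρ ^ 2 * σ2 ≤ lam)
    (f : ℝ → ℝ)
    (hf : ∀ γ, f γ = -r * ρ ^ 2 * (1 - γ) * σ2 + (lam / 2) * Real.log (1 - γ)) :
    StrictAntiOn f (Set.Ioo (0 : ℝ) 1) ∧
      (∀ γ ∈ Set.Ioo (0 : ℝ) 1, f 0 > f γ) ∧
      ∀ γ ∈ Set.Ico (0 : ℝ) 1, f γ ≤ f 0 ∧ (γ ≠ 0 → f γ < f 0) :=
  optimal_attention_corner_general r lam ρ σ2 hlam hcorner f hf
end

section
/- Let β, γ, κ, φ, χ be real numbers with κ ≠ 0, β ≠ 0 and φ ≠ 0, and let π, y, μ₁, μ₂, μ₂_prev, ϕ_t, ϕ_prev be real numbers satisfying the first-order conditions: (a) −π + μ₁(1−βγ) − γφμ₂ = 0; (b) −χ y − κ μ₁ + μ₂ − β⁻¹ μ₂_prev = 0; (c) μ₂ φ = ϕ_t and μ₂_prev φ = ϕ_prev. Then π + (χ/κ)(1−βγ) y = ϕ_t·((1−βγ)/(φκ) − γ) − ((1−βγ)/(κβφ))·ϕ_prev. -/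
/-! Solve the Euler-equation condition (b) for `κ μ₁` and substitute into the Phillips-curve
condition (a): the target rule is `-(a) - ((1 - βγ)/κ) (b)`, once the lower-bound multipliers
are rewritten as `μ₂ φ` and `μ₂_prev φ`. -/

/-- Proposition 3 (first part): the first-order conditions of the Ramsey
problem imply the optimal target rule under limited attention with an
effective lower bound:
`π + (χ/κ)(1−βγ) y = ϕ_t((1−βγ)/(φκ) − γ) − ((1−βγ)/(κβφ)) ϕ_prev`. -/
theorem optimal_target_rule_elb
    (β γ κ φ χ : ℝ) (hκ : κ ≠ 0) (hβ : β ≠ 0) (hφ : φ ≠ 0)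
    (π y μ₁ μ₂ μ₂prev ϕt ϕprev : ℝ)
    (ha : -π + μ₁ * (1 - β * γ) - γ * φ * μ₂ = 0)
    (hb : -χ * y - κ * μ₁ + μ₂ - β⁻¹ * μ₂prev = 0)
    (hc : μ₂ * φ = ϕt) (hcprev : μ₂prev * φ = ϕprev) :
    π + (χ / κ) * (1 - β * γ) * y
      = ϕt * ((1 - β * γ) / (φ * κ) - γ) - ((1 - β * γ) / (κ * β * φ)) * ϕprev := by
  subst hc hcprev
  linear_combination (norm := (field_simp; ring)) -ha - (1 - β * γ) / κ * hb
end
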